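/- Let ρ and γ be two rankings of a dense instance of r-Dense Feedback Arc Set, b_ρ and b_γ the respective numbers of inconsistent constraints, and l_ρ(v), l_γ(v) the respective numbers of left constraints of v. Then Σ_{v∈V} |l_ρ(v) − l_γ(v)| ≥ |b_ρ − b_γ|. -/

import Mathlib

/-- In a dense `r`-FAST instance on `Fin n`, the constraint on `S` is satisfied by the
ranking `ρ` iff the selected vertex `sel S` is `ρ`-last in `S`. -/
def fastSat {n : ℕ} (sel : Finset (Fin n) → Fin n) (S : Finset (Fin n))
    (ρ : Equiv.Perm (Fin n)) : Prop :=
  ∀ u ∈ S, u ≠ sel S → ρ u < ρ (sel S)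

/-- `l_ρ(v)`: the number of `r`-subsets (left constraints) whose `ρ`-maximum is `v`. -/
noncomputable def lCount (n r : ℕ) (ρ : Equiv.Perm (Fin n)) (v : Fin n) : ℕ :=
  {S : Finset (Fin n) | S.card = r ∧ v ∈ S ∧ ∀ u ∈ S, u ≠ v → ρ u < ρ v}.ncard

/-- `b_ρ`: the number of constraints inconsistent with `ρ`. -/
noncomputable def badCount (n r : ℕ) (sel : Finset (Fin n) → Fin n)
    (ρ : Equiv.Perm (Fin n)) : ℕ :=
  {S : Finset (Fin n) | S.card = r ∧ ¬ fastSat sel S ρ}.ncard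

/-!
If an `r`-set is satisfied by exactly one of `ρ, γ`, its `ρ`-last element `a` and its `γ`-last
element `b` differ, so `(a, b)` is a discordant pair, and with ranks counted from `0` there are at
most `C(min (ρ a) (γ b) - 1, r - 2)` such sets for given `a, b`. By the hockey-stick identity
`|l_ρ(v) - l_γ(v)| = ∑ t ∈ [min (ρ v) (γ v), max (ρ v) (γ v)), C(t, r - 2)`, so it suffices to
charge each discordant pair injectively to a term `(v, t)` of this double sum with
`t = min (ρ a) (γ b) - 1`: take `v = b` if `ρ a ≤ γ b` and `v = a` otherwise. For `r = 2` this is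
the Diaconis–Graham inequality between Kendall's distance and Spearman's footrule.
-/

open Finset Function

section Charging

variable {α : Type*} [Fintype α]

def discordantPairs (ρ γ : α → ℕ) : Finset (α × α) :=
  {p | ρ p.2 < ρ p.1 ∧ γ p.1 < γ p.2}

def chargePoint (ρ γ : α → ℕ) (p : α × α) : (_ : α) × ℕ :=
  ⟨if ρ p.1 ≤ γ p.2 then p.2 else p.1, min (ρ p.1) (γ p.2) - 1⟩

variable {ρ γ : α → ℕ}

lemma chargePoint_mem_displacement {p : α × α} (hp : p ∈ discordantPairs ρ γ) :
    chargePoint ρ γ p ∈ univ.sigma fun v => Ico (min (ρ v) (γ v)) (max (ρ v) (γ v)) := by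
  simp only [discordantPairs, mem_filter, mem_univ, true_and] at hp
  simp only [chargePoint, mem_sigma, mem_univ, true_and, mem_Ico]
  split_ifs <;> omega

lemma injOn_chargePoint (hρ : Injective ρ) (hγ : Injective γ) :
    Set.InjOn (chargePoint ρ γ) (discordantPairs ρ γ) := by
  rintro ⟨a, b⟩ hab ⟨a', b'⟩ hab' h
  simp only [discordantPairs, mem_coe, mem_filter, mem_univ, true_and] at hab hab'
  simp only [chargePoint, Sigma.mk.injEq, heq_iff_eq] at h
  obtain ⟨hv, ht⟩ := h
  split_ifs at hv <;> subst hv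
  · rw [hρ (by omega : ρ a = ρ a')]
  · omega
  · omega
  · rw [hγ (by omega : γ b = γ b')]

theorem sum_discordantPairs_le_sum_displacement [DecidableEq α] {M : Type*} [AddCommMonoid M]
    [Preorder M] [AddLeftMono M] (hρ : Injective ρ) (hγ : Injective γ) {w : ℕ → M}
    (hw : ∀ t, 0 ≤ w t) :
    ∑ p ∈ discordantPairs ρ γ, w (min (ρ p.1) (γ p.2) - 1) ≤
      ∑ v, ∑ t ∈ Ico (min (ρ v) (γ v)) (max (ρ v) (γ v)), w t := by
  calc ∑ p ∈ discordantPairs ρ γ, w (min (ρ p.1) (γ p.2) - 1)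
      = ∑ q ∈ (discordantPairs ρ γ).image (chargePoint ρ γ), w q.2 :=
        (sum_image (f := fun q => w q.2) (injOn_chargePoint hρ hγ)).symm
    _ ≤ ∑ q ∈ univ.sigma fun v => Ico (min (ρ v) (γ v)) (max (ρ v) (γ v)), w q.2 :=
        sum_le_sum_of_subset_of_nonneg
          (image_subset_iff.2 fun _ => chargePoint_mem_displacement) fun _ _ _ => hw _
    _ = _ := sum_sigma _ _ _

end Charging

lemma sum_range_choose_eq_choose_succ (x k : ℕ) :
    ∑ t ∈ range x, t.choose k = x.choose (k + 1) := by
  induction x with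
  | zero => simp
  | succ x ih => rw [sum_range_succ, ih, Nat.choose_succ_succ', add_comm]

lemma abs_choose_succ_sub_choose_succ (x y k : ℕ) :
    |(x.choose (k + 1) : ℤ) - y.choose (k + 1)| =
      ∑ t ∈ Ico (min x y) (max x y), (t.choose k : ℤ) := by
  wlog h : y ≤ x generalizing x y
  · rw [abs_sub_comm, min_comm, max_comm]
    exact this y x (by omega)
  have hle : (y.choose (k + 1) : ℤ) ≤ x.choose (k + 1) := by
    exact_mod_cast Nat.choose_le_choose _ h
  rw [min_eq_right h, max_eq_left h, sum_Ico_eq_sub _ h, abs_of_nonneg (sub_nonneg.2 hle)]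
  simp only [← Nat.cast_sum, sum_range_choose_eq_choose_succ]

section Rankings

variable {n : ℕ}

instance (sel : Finset (Fin n) → Fin n) (S : Finset (Fin n)) (ρ : Equiv.Perm (Fin n)) :
    Decidable (fastSat sel S ρ) :=
  inferInstanceAs (Decidable (∀ u ∈ S, _))

def IsLastIn (τ : Equiv.Perm (Fin n)) (S : Finset (Fin n)) (v : Fin n) : Prop :=
  v ∈ S ∧ ∀ u ∈ S, u ≠ v → τ u < τ v

instance (τ : Equiv.Perm (Fin n)) (S : Finset (Fin n)) (v : Fin n) :
    Decidable (IsLastIn τ S v) :=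
  inferInstanceAs (Decidable (_ ∧ _))

lemma exists_isLastIn (τ : Equiv.Perm (Fin n)) {S : Finset (Fin n)} (hS : S.Nonempty) :
    ∃ v, IsLastIn τ S v := by
  obtain ⟨v, hv, hmax⟩ := exists_max_image S τ hS
  exact ⟨v, hv, fun u hu hne => (hmax u hu).lt_of_ne (τ.injective.ne hne)⟩

lemma card_filter_apply_lt (τ : Equiv.Perm (Fin n)) (v : Fin n) :
    #{u | τ u < τ v} = (τ v : ℕ) := by
  rw [card_equiv τ (t := {x | x < τ v}) (by simp), filter_gt_eq_Iio, Fin.card_Iio]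

lemma lCount_eq_choose (k : ℕ) (τ : Equiv.Perm (Fin n)) (v : Fin n) :
    lCount n (k + 1) τ v = (τ v : ℕ).choose k := by
  have hv : ∀ T ∈ powersetCard k {u | τ u < τ v}, v ∉ T := fun T hT hvT =>
    (mem_filter.1 ((mem_powersetCard.1 hT).1 hvT)).2.false
  have hset : {S : Finset (Fin n) | S.card = k + 1 ∧ v ∈ S ∧ ∀ u ∈ S, u ≠ v → τ u < τ v} =
      ((powersetCard k {u | τ u < τ v}).image (insert v) : Finset _) := by
    ext S
    simp only [Set.mem_ofPred_eq, coe_image, Set.mem_image, mem_coe]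
    constructor
    · rintro ⟨hc, hvS, hlt⟩
      refine ⟨S.erase v, mem_powersetCard.2 ⟨fun u hu => ?_, ?_⟩, insert_erase hvS⟩
      · exact mem_filter.2 ⟨mem_univ u, hlt u (mem_of_mem_erase hu) (ne_of_mem_erase hu)⟩
      · rw [card_erase_of_mem hvS, hc, Nat.add_sub_cancel]
    · rintro ⟨T, hT, rfl⟩
      refine ⟨by rw [card_insert_of_notMem (hv T hT), (mem_powersetCard.1 hT).2],
        mem_insert_self v T, fun u hu hne => ?_⟩
      exact (mem_filter.1 ((mem_powersetCard.1 hT).1 (mem_of_mem_insert_of_ne hu hne))).2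
  rw [lCount, hset, Set.ncard_coe_finset, card_image_of_injOn, card_powersetCard,
    card_filter_apply_lt]
  intro T hT T' hT' h
  rw [← erase_insert (hv T hT), ← erase_insert (hv T' hT'), h]

variable (r : ℕ) (ρ γ : Equiv.Perm (Fin n))

def lastMismatch : Finset (Finset (Fin n)) :=
  {S ∈ powersetCard r univ | ∃ a b, a ≠ b ∧ IsLastIn ρ S a ∧ IsLastIn γ S b}

lemma lastMismatch_comm : lastMismatch r ρ γ = lastMismatch r γ ρ := by
  ext S
  simp only [lastMismatch, mem_filter]
  exact and_congr_right fun _ =>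
    ⟨fun ⟨a, b, h, ha, hb⟩ => ⟨b, a, h.symm, hb, ha⟩,
      fun ⟨a, b, h, ha, hb⟩ => ⟨b, a, h.symm, hb, ha⟩⟩

variable {r ρ γ}

def unsatisfiedSets (r : ℕ) (sel : Finset (Fin n) → Fin n)
    (ρ : Equiv.Perm (Fin n)) : Finset (Finset (Fin n)) :=
  {S ∈ powersetCard r univ | ¬ fastSat sel S ρ}

lemma badCount_eq_card_unsatisfiedSets (sel : Finset (Fin n) → Fin n) :
    badCount n r sel ρ = #(unsatisfiedSets r sel ρ) := by
  rw [badCount, unsatisfiedSets, ← Set.ncard_coe_finset]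
  congr
  ext S
  simp

lemma unsatisfiedSets_sdiff_subset_lastMismatch {sel : Finset (Fin n) → Fin n}
    (hsel : ∀ S : Finset (Fin n), S.card = r → sel S ∈ S) :
    unsatisfiedSets r sel ρ \ unsatisfiedSets r sel γ ⊆ lastMismatch r ρ γ := by
  intro S hS
  simp only [unsatisfiedSets, mem_sdiff, mem_filter, not_and, not_not,
    mem_powersetCard_univ] at hS
  obtain ⟨⟨hcard, hρ⟩, hγ⟩ := hS
  have hsel := hsel S hcard
  obtain ⟨a, ha⟩ := exists_isLastIn ρ ⟨_, hsel⟩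
  exact mem_filter.2 ⟨mem_powersetCard_univ.2 hcard,
    a, sel S, fun h => hρ (by rw [fastSat, ← h]; exact ha.2), ha, hsel, hγ hcard⟩

lemma abs_badCount_sub_le_card_lastMismatch {sel : Finset (Fin n) → Fin n}
    (hsel : ∀ S : Finset (Fin n), S.card = r → sel S ∈ S) :
    |(badCount n r sel ρ : ℤ) - badCount n r sel γ| ≤ #(lastMismatch r ρ γ) := by
  have hργ := card_le_card (unsatisfiedSets_sdiff_subset_lastMismatch (ρ := ρ) (γ := γ) hsel)
  have hγρ := card_le_card (unsatisfiedSets_sdiff_subset_lastMismatch (ρ := γ) (γ := ρ) hsel)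
  rw [lastMismatch_comm] at hγρ
  have h₁ := card_le_card_sdiff_add_card (s := unsatisfiedSets r sel ρ)
    (t := unsatisfiedSets r sel γ)
  have h₂ := card_le_card_sdiff_add_card (s := unsatisfiedSets r sel γ)
    (t := unsatisfiedSets r sel ρ)
  rw [badCount_eq_card_unsatisfiedSets, badCount_eq_card_unsatisfiedSets, abs_sub_le_iff]
  omega

lemma card_isLastIn_pair_le (k : ℕ) {a b : Fin n} (hab : ρ b < ρ a) (hba : γ a < γ b) :
    #{S ∈ powersetCard (k + 2) univ | IsLastIn ρ S a ∧ IsLastIn γ S b} ≤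
      (min (ρ a : ℕ) (γ b) - 1).choose k := by
  set U : Finset (Fin n) := {u | ρ u < ρ a ∧ γ u < γ b}
  have hUρ : #U ≤ (ρ a : ℕ) - 1 := by
    rw [← card_filter_apply_lt, ← card_erase_of_mem (s := {u | ρ u < ρ a}) (a := b) (by simpa)]
    exact card_le_card fun u hu => by
      simp only [U, mem_filter, mem_univ, true_and, mem_erase] at hu ⊢
      exact ⟨fun h => (h ▸ hu.2).false, hu.1⟩
  have hUγ : #U ≤ (γ b : ℕ) - 1 := by
    rw [← card_filter_apply_lt, ← card_erase_of_mem (s := {u | γ u < γ b}) (a := a) (by simpa)]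
    exact card_le_card fun u hu => by
      simp only [U, mem_filter, mem_univ, true_and, mem_erase] at hu ⊢
      exact ⟨fun h => (h ▸ hu.1).false, hu.2⟩
  have hmem : ∀ S ∈ ({S ∈ powersetCard (k + 2) univ | IsLastIn ρ S a ∧ IsLastIn γ S b} :
      Finset (Finset (Fin n))), a ∈ S ∧ b ∈ S.erase a := fun S hS => by
    obtain ⟨-, ha, hb⟩ := mem_filter.1 hS
    exact ⟨ha.1, mem_erase.2 ⟨fun h => hab.ne (congrArg ρ h), hb.1⟩⟩
  calc _ ≤ #(powersetCard k U) := by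
        refine card_le_card_of_injOn (fun S => (S.erase a).erase b) (fun S hS => ?_) ?_
        · obtain ⟨haS, hbS⟩ := hmem S hS
          obtain ⟨hcard, ha, hb⟩ := mem_filter.1 hS
          refine mem_powersetCard.2 ⟨fun u hu => ?_, ?_⟩
          · obtain ⟨hub, hua, huS⟩ : u ≠ b ∧ u ≠ a ∧ u ∈ S := by simpa using hu
            exact mem_filter.2 ⟨mem_univ u, ha.2 u huS hua, hb.2 u huS hub⟩
          · rw [card_erase_of_mem hbS, card_erase_of_mem haS, mem_powersetCard_univ.1 hcard]
            rfl
        · intro S hS S' hS' h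
          obtain ⟨haS, hbS⟩ := hmem S hS
          obtain ⟨haS', hbS'⟩ := hmem S' hS'
          rw [← insert_erase haS, ← insert_erase hbS, ← insert_erase haS', ← insert_erase hbS']
          exact congrArg (insert a ∘ insert b) h
    _ = _ := card_powersetCard k U
    _ ≤ _ := Nat.choose_le_choose k (by omega)

lemma card_lastMismatch_le (k : ℕ) :
    #(lastMismatch (k + 2) ρ γ) ≤ ∑ p ∈ discordantPairs (fun v => (ρ v : ℕ)) (fun v => γ v),
      (min (ρ p.1 : ℕ) (γ p.2) - 1).choose k := by
  calc #(lastMismatch (k + 2) ρ γ)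
      ≤ #((discordantPairs (fun v => (ρ v : ℕ)) (fun v => γ v)).biUnion fun p =>
          {S ∈ powersetCard (k + 2) univ | IsLastIn ρ S p.1 ∧ IsLastIn γ S p.2}) := by
        refine card_le_card fun S hS => ?_
        obtain ⟨hcard, a, b, hne, ha, hb⟩ := mem_filter.1 hS
        refine mem_biUnion.2 ⟨(a, b), ?_, mem_filter.2 ⟨hcard, ha, hb⟩⟩
        exact mem_filter.2 ⟨mem_univ _, ha.2 b hb.1 hne.symm, hb.2 a ha.1 hne⟩
    _ ≤ _ := card_biUnion_le
    _ ≤ _ := sum_le_sum fun p hp => by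
        obtain ⟨-, hab, hba⟩ := mem_filter.1 hp
        exact card_isLastIn_pair_le k hab hba

end Rankings

/-- For any two rankings `ρ, γ` of a dense `r`-FAST instance,
`Σ_v |l_ρ(v) − l_γ(v)| ≥ |b_ρ − b_γ|`. -/
theorem sum_lCount_diff_ge_bad_diff
    {n r : ℕ} (hr : 2 ≤ r)
    (sel : Finset (Fin n) → Fin n)
    (hsel : ∀ S : Finset (Fin n), S.card = r → sel S ∈ S)
    (ρ γ : Equiv.Perm (Fin n)) :
    |(badCount n r sel ρ : ℤ) - (badCount n r sel γ : ℤ)| ≤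
      ∑ v : Fin n, |(lCount n r ρ v : ℤ) - (lCount n r γ v : ℤ)| := by
  obtain ⟨k, rfl⟩ : ∃ k, r = k + 2 := ⟨r - 2, by omega⟩
  calc |(badCount n (k + 2) sel ρ : ℤ) - badCount n (k + 2) sel γ|
      ≤ #(lastMismatch (k + 2) ρ γ) := abs_badCount_sub_le_card_lastMismatch hsel
    _ ≤ ∑ p ∈ discordantPairs (fun v => (ρ v : ℕ)) (fun v => γ v),
          ((min (ρ p.1 : ℕ) (γ p.2) - 1).choose k : ℤ) := by
        exact_mod_cast card_lastMismatch_le k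
    _ ≤ ∑ v, ∑ t ∈ Ico (min (ρ v : ℕ) (γ v)) (max (ρ v : ℕ) (γ v)), (t.choose k : ℤ) :=
        sum_discordantPairs_le_sum_displacement (Fin.val_injective.comp ρ.injective)
          (Fin.val_injective.comp γ.injective) (w := fun t => (t.choose k : ℤ))
          fun t => by positivity
    _ = ∑ v, |(lCount n (k + 2) ρ v : ℤ) - lCount n (k + 2) γ v| := by
        simp only [lCount_eq_choose, abs_choose_succ_sub_choose_succ]
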